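/- arXiv:1312.3784 — 2 statements merged into one kernel-verified Lean document; each statement's English description precedes it below -/
import Mathlib

section
/- Let U ∈ 𝔏 be invertible (a unit of the matrix ring over LaurentPolynomial ℂ). Then the map σ : 𝔏 × ℂ → 𝔏 × ℂ given by σ(a, λ) = (U*a*U⁻¹, λ + Res(trace(U⁻¹ * U' * a))) is a Lie algebra automorphism of the central extension 𝔏 × ℂ with bracket [(a,λ),(b,μ)] = ([a,b], ψ(a,b)), where U' denotes the entrywise Laurent derivative ((U')ₙ = (n+1)·U_{n+1}) and Res(P) is the coefficient of t⁻¹ of P. This is the type 1(a) automorphism formula of the paper. -/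
noncomputable section

/-- The loop algebra: `N × N` matrices over Laurent polynomials, a Lie ring under the
commutator bracket `⁅a, b⁆ = a * b - b * a`. -/
abbrev Loop (N : ℕ) := Matrix (Fin N) (Fin N) (LaurentPolynomial ℂ)

/-- The matrix of `n`-th Laurent coefficients of the entries of `a`. -/
def coeffM {N : ℕ} (a : Loop N) (n : ℤ) : Matrix (Fin N) (Fin N) ℂ :=
  fun i j => (a i j).coeff n

/-- The cocycle `ψ(a,b) = Σₙ n · trace(aₙ * b₋ₙ)`, i.e. `Res(tr((da/dt)·b))`. -/
def psi {N : ℕ} (a b : Loop N) : ℂ :=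
  ∑ᶠ n : ℤ, (n : ℂ) * Matrix.trace (coeffM a n * coeffM b (-n))

/-- The entrywise Laurent derivative: `(Uʹ)ₙ = (n+1)·U_{n+1}`. -/
def derM {N : ℕ} (a : Loop N) : Loop N :=
  fun i j => Finsupp.sum (a i j).coeff fun n c => AddMonoidAlgebra.single (n - 1) ((n : ℂ) * c)

/-- The residue of a Laurent polynomial: the coefficient of `t⁻¹`. -/
def res (p : LaurentPolynomial ℂ) : ℂ := p.coeff (-1)

/-- The bracket of the central extension $\tilde L(g) = 𝔏 ⊕ ℂc$. -/
def brCE {N : ℕ} (x y : Loop N × ℂ) : Loop N × ℂ :=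
  (⁅x.1, y.1⁆, psi x.1 y.1)

/-- The type 1(a) automorphism attached to a unit `U`:
`σ(a, λ) = (U a U⁻¹, λ + Res(tr(U⁻¹ Uʹ a)))`. -/
def sigmaU {N : ℕ} (U : (Loop N)ˣ) (x : Loop N × ℂ) : Loop N × ℂ :=
  ((U : Loop N) * x.1 * (↑U⁻¹ : Loop N),
    x.2 + res (Matrix.trace ((↑U⁻¹ : Loop N) * derM (U : Loop N) * x.1)))

/-! `ψ(a, b)` is the residue of `tr(a' b)`. Since `d/dt` is a derivation,
`(U a U⁻¹)' = U (a' + [U⁻¹U', a]) U⁻¹`, so cyclicity of the trace gives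
`ψ(U a U⁻¹, U b U⁻¹) = ψ(a, b) + Res tr(U⁻¹U' [a, b])`: the defect is exactly the correction
term of `σ_U`. The logarithmic derivative `U ↦ U⁻¹U'` turns products into sums up to
conjugation, which makes `U ↦ σ_U` multiplicative, so `σ_{U⁻¹}` inverts `σ_U`. -/

namespace LaurentPolynomial

variable {R : Type*} [Ring R]

def derivative : R[T;T⁻¹] →+ R[T;T⁻¹] where
  toFun p := p.coeff.sum fun n c => .single (n - 1) (n * c)
  map_zero' := Finsupp.sum_zero_index
  map_add' p q := Finsupp.sum_add_index' (by simp) (by simp [mul_add])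

theorem derivative_single (n : ℤ) (c : R) :
    derivative (.single n c : R[T;T⁻¹]) = .single (n - 1) (n * c) :=
  Finsupp.sum_single_index (h := fun (m : ℤ) (a : R) => (.single (m - 1) (m * a) : R[T;T⁻¹]))
    (by simp)

theorem derivative_one : derivative (1 : R[T;T⁻¹]) = 0 := by
  simpa using derivative_single (R := R) 0 1

theorem derivative_mul (p q : R[T;T⁻¹]) :
    derivative (p * q) = derivative p * q + p * derivative q := by
  induction p using AddMonoidAlgebra.induction_linear with
  | zero => simp
  | add p₁ p₂ h₁ h₂ => simp only [add_mul, map_add, h₁, h₂]; abel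
  | single n a =>
    induction q using AddMonoidAlgebra.induction_linear with
    | zero => simp
    | add q₁ q₂ h₁ h₂ => simp only [mul_add, map_add, h₁, h₂]; abel
    | single m b =>
      simp only [AddMonoidAlgebra.single_mul_single, derivative_single]
      rw [show n - 1 + m = n + m - 1 by ring, show n + (m - 1) = n + m - 1 by ring,
        ← AddMonoidAlgebra.single_add]
      congr 1
      push_cast
      rw [add_mul, mul_assoc, ← mul_assoc a, ← Int.cast_comm, mul_assoc]

theorem coeff_derivative (p : R[T;T⁻¹]) (n : ℤ) :
    (derivative p).coeff n = (n + 1) * p.coeff (n + 1) := by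
  induction p using AddMonoidAlgebra.induction_linear with
  | zero => simp
  | add p q hp hq => simp [hp, hq, mul_add]
  | single m a =>
    simp only [derivative_single, AddMonoidAlgebra.coeff_single, Finsupp.single_apply]
    by_cases h : m = n + 1
    · subst h; simp
    · rw [if_neg (by omega), if_neg h, mul_zero]

theorem coeff_mul_eq_finsum (p q : R[T;T⁻¹]) (n : ℤ) :
    (p * q).coeff n = ∑ᶠ m, p.coeff m * q.coeff (n - m) := by
  have support_subset :
      (Function.support fun m => p.coeff m * q.coeff (n - m)) ⊆ p.coeff.support :=
    fun m hm => Finsupp.mem_support_iff.2 (left_ne_zero_of_mul hm)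
  rw [AddMonoidAlgebra.coeff_mul_apply_left, Finsupp.sum,
    finsum_eq_sum_of_support_subset _ support_subset]
  simp [sub_eq_neg_add]

theorem coeff_neg_one_derivative_mul (p q : R[T;T⁻¹]) :
    (derivative p * q).coeff (-1) = ∑ᶠ n : ℤ, n * p.coeff n * q.coeff (-n) := by
  rw [coeff_mul_eq_finsum, ← finsum_comp_equiv (Equiv.subRight (1 : ℤ))]
  refine finsum_congr fun n => ?_
  simp [coeff_derivative, mul_assoc, show -1 - (n - 1) = -n by ring]

end LaurentPolynomial

open LaurentPolynomial

theorem Units.conj_mul_conj {M : Type*} [Monoid M] (u : Mˣ) (x y : M) :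
    u * x * ↑u⁻¹ * (u * y * ↑u⁻¹) = u * (x * y) * ↑u⁻¹ := by
  simp only [mul_assoc, Units.inv_mul_cancel_left]

section

variable {N : ℕ}

theorem derM_eq_mapMatrix (a : Loop N) : derM a = derivative.mapMatrix a := rfl

theorem derM_one : derM (1 : Loop N) = 0 := by
  ext i j
  rw [derM_eq_mapMatrix, AddMonoidHom.mapMatrix_apply, Matrix.map_apply, Matrix.one_apply]
  split_ifs <;> simp [derivative_one]

theorem derM_mul (a b : Loop N) : derM (a * b) = derM a * b + a * derM b := by
  ext i j
  simp [derM_eq_mapMatrix, Matrix.mul_apply, derivative_mul, Finset.sum_add_distrib]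

theorem derM_units_inv (U : (Loop N)ˣ) :
    derM (↑U⁻¹ : Loop N) = -(↑U⁻¹ * derM (U : Loop N) * ↑U⁻¹ : Loop N) :=
  calc derM (↑U⁻¹ : Loop N) = derM (↑U⁻¹ : Loop N) * (↑U * ↑U⁻¹ : Loop N) := by
        rw [U.mul_inv, mul_one]
    _ = (derM (↑U⁻¹ : Loop N) * ↑U + ↑U⁻¹ * derM (U : Loop N)) * ↑U⁻¹ -
          (↑U⁻¹ * derM (U : Loop N) * ↑U⁻¹ : Loop N) := by
      noncomm_ring
    _ = _ := by rw [← derM_mul, U.inv_mul, derM_one]; noncomm_ring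

theorem derM_units_conj (U : (Loop N)ˣ) (a : Loop N) :
    derM (↑U * a * ↑U⁻¹ : Loop N) =
      ↑U * (derM a + ⁅↑U⁻¹ * derM (U : Loop N), a⁆) * (↑U⁻¹ : Loop N) := by
  rw [derM_mul, derM_mul, derM_units_inv, Ring.lie_def]
  linear_combination (norm := noncomm_ring) -(U.mul_inv) * (derM (U : Loop N) * a * ↑U⁻¹)

theorem trace_derM_units_conj_mul (U : (Loop N)ˣ) (a b : Loop N) :
    (derM (↑U * a * ↑U⁻¹ : Loop N) * (↑U * b * ↑U⁻¹)).trace =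
      (derM a * b).trace + (↑U⁻¹ * derM (U : Loop N) * ⁅a, b⁆ : Loop N).trace := by
  set L : Loop N := ↑U⁻¹ * derM (U : Loop N)
  have cycle : (a * L * b).trace = (L * (b * a)).trace := by
    rw [Matrix.trace_mul_cycle, Matrix.trace_mul_comm]
  rw [derM_units_conj, U.conj_mul_conj, Matrix.trace_units_conj, Ring.lie_def, Ring.lie_def,
    add_mul, sub_mul, mul_sub, Matrix.trace_add, Matrix.trace_sub, Matrix.trace_sub, mul_assoc L,
    cycle]

theorem psi_eq_res_trace_derM_mul (a b : Loop N) : psi a b = res (derM a * b).trace := by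
  have finite (i k : Fin N) :
      (fun n : ℤ => (n : ℂ) * (a i k).coeff n * (b k i).coeff (-n)).HasFiniteSupport := by
    have := (a i k).coeff.hasFiniteSupport
    fun_prop
  calc psi a b
      = ∑ᶠ n : ℤ, ∑ i, ∑ k, (n : ℂ) * (a i k).coeff n * (b k i).coeff (-n) := by
        refine finsum_congr fun n => ?_
        simp [Matrix.trace, Matrix.mul_apply, coeffM, Finset.mul_sum, mul_assoc]
    _ = ∑ i, ∑ k, ∑ᶠ n : ℤ, (n : ℂ) * (a i k).coeff n * (b k i).coeff (-n) := by
        rw [finsum_sum_comm _ _ fun i _ => .sum (fun k => finite i k) _]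
        exact Finset.sum_congr rfl fun i _ => finsum_sum_comm _ _ fun k _ => finite i k
    _ = res (derM a * b).trace := by
        simp [res, Matrix.trace, Matrix.mul_apply, AddMonoidAlgebra.coeff_sum, derM_eq_mapMatrix,
          coeff_neg_one_derivative_mul]

theorem sigmaU_add (U : (Loop N)ˣ) (x y : Loop N × ℂ) :
    sigmaU U (x + y) = sigmaU U x + sigmaU U y := by
  ext
  · simp only [sigmaU, Prod.fst_add, mul_add, add_mul, Prod.mk_add_mk]
  · simp only [sigmaU, Prod.fst_add, Prod.snd_add, mul_add, Matrix.trace_add, res,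
      AddMonoidAlgebra.coeff_add, Finsupp.add_apply]
    ring

theorem sigmaU_smul (U : (Loop N)ˣ) (c : ℂ) (x : Loop N × ℂ) :
    sigmaU U (c • x) = c • sigmaU U x := by
  ext
  · simp only [sigmaU, Prod.smul_fst, mul_smul_comm, smul_mul_assoc, Prod.smul_mk]
  · simp only [sigmaU, Prod.smul_fst, Prod.smul_snd, mul_smul_comm, Matrix.trace_smul, res,
      AddMonoidAlgebra.coeff_smul, Finsupp.smul_apply, smul_eq_mul]
    ring

theorem sigmaU_one : sigmaU (1 : (Loop N)ˣ) = id := by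
  ext x <;> simp [sigmaU, derM_one, res]

theorem trace_units_mul_inv_mul_derM (U V : (Loop N)ˣ) (a : Loop N) :
    (↑(U * V)⁻¹ * derM ((U * V : (Loop N)ˣ) : Loop N) * a : Loop N).trace =
      (↑V⁻¹ * derM (V : Loop N) * a : Loop N).trace +
        (↑U⁻¹ * derM (U : Loop N) * (↑V * a * ↑V⁻¹) : Loop N).trace := by
  have expand : (↑(U * V)⁻¹ * derM ((U * V : (Loop N)ˣ) : Loop N) * a : Loop N) =
      (↑V⁻¹ * (↑U⁻¹ * derM (U : Loop N) * (↑V * a * ↑V⁻¹)) * ↑V +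
        ↑V⁻¹ * derM (V : Loop N) * a : Loop N) := by
    rw [mul_inv_rev, Units.val_mul, Units.val_mul, derM_mul]
    linear_combination (norm := noncomm_ring)
      (↑V⁻¹ : Loop N) * U.inv_mul * derM (V : Loop N) * a -
        (↑V⁻¹ * ↑U⁻¹ * derM (U : Loop N) * ↑V * a : Loop N) * V.inv_mul
  rw [expand, Matrix.trace_add, Matrix.trace_units_conj', add_comm]

theorem sigmaU_mul (U V : (Loop N)ˣ) : sigmaU (U * V) = sigmaU U ∘ sigmaU V := by
  ext x
  · simp only [sigmaU, Function.comp_apply, Units.val_mul, mul_inv_rev, mul_assoc]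
  · simp only [sigmaU, Function.comp_apply, trace_units_mul_inv_mul_derM, res,
      AddMonoidAlgebra.coeff_add, Finsupp.add_apply, add_assoc]

theorem sigmaU_leftInverse (U : (Loop N)ˣ) : Function.LeftInverse (sigmaU U⁻¹) (sigmaU U) := by
  have h : sigmaU U⁻¹ ∘ sigmaU U = id := by rw [← sigmaU_mul, inv_mul_cancel, sigmaU_one]
  exact congrFun h

theorem sigmaU_brCE (U : (Loop N)ˣ) (x y : Loop N × ℂ) :
    sigmaU U (brCE x y) = brCE (sigmaU U x) (sigmaU U y) := by
  ext
  · simp only [sigmaU, brCE, Ring.lie_def, mul_sub, sub_mul, U.conj_mul_conj]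
  · simp only [sigmaU, brCE, psi_eq_res_trace_derM_mul, trace_derM_units_conj_mul, res,
      AddMonoidAlgebra.coeff_add, Finsupp.add_apply]

end

theorem sigmaU_isLieAutomorphism_general (N : ℕ) (U : (Loop N)ˣ) :
    Function.Bijective (sigmaU U) ∧
    (∀ x y : Loop N × ℂ, sigmaU U (x + y) = sigmaU U x + sigmaU U y) ∧
    (∀ (c : ℂ) (x : Loop N × ℂ), sigmaU U (c • x) = c • sigmaU U x) ∧
    (∀ x y : Loop N × ℂ, sigmaU U (brCE x y) = brCE (sigmaU U x) (sigmaU U y)) :=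
  ⟨Function.bijective_iff_has_inverse.2 ⟨sigmaU U⁻¹, sigmaU_leftInverse U,
      fun x => by simpa only [inv_inv] using sigmaU_leftInverse U⁻¹ x⟩,
    sigmaU_add U, sigmaU_smul U, sigmaU_brCE U⟩

/-- The type 1(a) formula defines a Lie algebra automorphism of the central extension:
it is bijective, ℂ-linear and preserves the bracket. -/
theorem sigmaU_isLieAutomorphism (N : ℕ) (hN : 0 < N) (U : (Loop N)ˣ) :
    Function.Bijective (sigmaU U) ∧
    (∀ x y : Loop N × ℂ, sigmaU U (x + y) = sigmaU U x + sigmaU U y) ∧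
    (∀ (c : ℂ) (x : Loop N × ℂ), sigmaU U (c • x) = c • sigmaU U x) ∧
    (∀ x y : Loop N × ℂ, sigmaU U (brCE x y) = brCE (sigmaU U x) (sigmaU U y)) :=
  sigmaU_isLieAutomorphism_general N U
end
end

section
/- Let p, q be positive natural numbers with N = p + q, let J ∈ 𝔏 be the constant diagonal matrix diag(1,…,1,−1,…,−1) (p ones, q minus-ones), and let η : 𝔏 → 𝔏 be the substitution t ↦ −t given coefficientwise by (η X)ₙ = (−1)ⁿ·Xₙ. Then the map τ : 𝔏 → 𝔏, τ(X) = J*(η X)*J, is an involutive ℂ-linear Lie algebra automorphism of 𝔏 (τ² = id and τ[a,b] = [τa, τb]) which commutes with the Cartan involution ω; this is the type 1(a) automorphism with u = −1 used in Case II of the paper. -/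
noncomputable section

/-- The Cartan involution `ω`, determined by `(ω a)ₙ = −(a₋ₙ)ᴴ` for all `n : ℤ`,
i.e. the map `X(t) ↦ −conj(X)(t⁻¹)ᵗ`. -/
def omega {N : ℕ} (a : Loop N) : Loop N :=
  fun i j => Finsupp.sum (a j i).coeff fun n c => AddMonoidAlgebra.single (-n) (-(starRingEnd ℂ c))

/-- The constant diagonal matrix `J = diag(1,…,1,−1,…,−1)` (`p` ones, `q` minus-ones),
as an element of the loop algebra `Loop (p + q)`. -/
def Jmat (p q : ℕ) : Loop (p + q) :=
  Matrix.diagonal fun i => if (i : ℕ) < p then 1 else -1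

/-- The substitution `t ↦ −t`, given coefficientwise by `(η X)ₙ = (−1)ⁿ · Xₙ`. -/
def eta {N : ℕ} (a : Loop N) : Loop N :=
  fun i j => Finsupp.sum (a i j).coeff fun n c => AddMonoidAlgebra.single n ((-1 : ℂ) ^ n * c)

/-- The type 1(a) automorphism with `u = −1`: `τ(X) = J (η X) J`. -/
def tauJ (p q : ℕ) (X : Loop (p + q)) : Loop (p + q) :=
  Jmat p q * eta X * Jmat p q

/-!
The substitution `η` is the twist of `ℂ[t, t⁻¹]` by the character `n ↦ (-1)ⁿ` of `ℤ`, applied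
entrywise; as twisting is multiplicative in the character, `η` is an involutive algebra
automorphism. Conjugation by `J` is one too, since `J² = 1` and `η J = J`. Entrywise, `τ` twists the
`(i, j)` entry and multiplies it by the sign `Jᵢᵢ Jⱼⱼ = Jⱼⱼ Jᵢᵢ`; both operations commute with `ω`,
the twist because `(-1)⁻ⁿ = conj ((-1)ⁿ)`.
-/

namespace AddMonoidAlgebra

variable {k G : Type*} [CommSemiring k] [AddCommMonoid G]

def twist (χ : Multiplicative G →* k) : k[G] →ₐ[k] k[G] :=
  lift k k[G] G ((algebraMap k k[G] : k →* k[G]).comp χ * of k G)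

lemma twist_single (χ : Multiplicative G →* k) (g : G) (c : k) :
    twist χ (single g c) = single g (χ (.ofAdd g) * c) := by
  rw [twist, lift_single, MonoidHom.mul_apply, MonoidHom.comp_apply, MonoidHom.coe_coe,
    ← Algebra.smul_def, of_apply, smul_smul, smul_single', mul_one, mul_comm]
  rfl

lemma twist_apply (χ : Multiplicative G →* k) (f : k[G]) :
    twist χ f = f.coeff.sum fun g c => single g (χ (.ofAdd g) * c) := by
  conv_lhs => rw [← sum_coeff_single f]
  simp only [map_finsuppSum, twist_single]

lemma twist_twist (χ ψ : Multiplicative G →* k) (f : k[G]) :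
    twist χ (twist ψ f) = twist (χ * ψ) f := by
  induction f using induction_linear with
  | zero => simp only [map_zero]
  | add f g hf hg => simp only [map_add, hf, hg]
  | single g c => simp only [twist_single, MonoidHom.mul_apply, mul_assoc]

lemma twist_one (f : k[G]) : twist 1 f = f := by
  induction f using induction_linear with
  | zero => simp only [map_zero]
  | add f g hf hg => simp only [map_add, hf, hg]
  | single g c => rw [twist_single, MonoidHom.one_apply, one_mul]

end AddMonoidAlgebra

open AddMonoidAlgebra

def altChar : Multiplicative ℤ →* ℂ where
  toFun n := (-1) ^ n.toAdd
  map_one' := zpow_zero _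
  map_mul' m n := zpow_add₀ (by norm_num) _ _

lemma altChar_mul_self : altChar * altChar = 1 := by
  ext
  simp [altChar]

def omegaCoeff : LaurentPolynomial ℂ →+ LaurentPolynomial ℂ where
  toFun f := f.coeff.sum fun n c => single (-n) (-(starRingEnd ℂ c))
  map_zero' := Finsupp.sum_zero_index
  map_add' f g := Finsupp.sum_add_index' (fun _ => by rw [map_zero, neg_zero, single_zero])
    fun _ _ _ => by rw [map_add, neg_add, single_add]

lemma omegaCoeff_single (n : ℤ) (c : ℂ) :
    omegaCoeff (single n c) = single (-n) (-(starRingEnd ℂ c)) := by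
  show (single n c).coeff.sum (fun m d => single (-m) (-(starRingEnd ℂ d))) = _
  rw [coeff_single, Finsupp.sum_single_index]
  rw [map_zero, neg_zero, single_zero]

lemma twist_altChar_omegaCoeff (f : LaurentPolynomial ℂ) :
    twist altChar (omegaCoeff f) = omegaCoeff (twist altChar f) := by
  induction f using induction_linear with
  | zero => simp only [map_zero]
  | add f g hf hg => simp only [map_add, hf, hg]
  | single n c =>
    have h : ((-1 : ℂ) ^ (-n)) = starRingEnd ℂ ((-1) ^ n) := by
      rw [map_zpow₀, map_neg, map_one, zpow_neg, ← inv_zpow, inv_neg, inv_one]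
    simp only [omegaCoeff_single, twist_single, altChar, MonoidHom.coe_mk, OneHom.coe_mk,
      toAdd_ofAdd, h, map_mul, mul_neg]

lemma eta_eq_map {N : ℕ} (X : Loop N) : eta X = (twist altChar).mapMatrix X := by
  ext i j
  simp only [eta, twist_apply, AlgHom.mapMatrix_apply, Matrix.map_apply]
  rfl

lemma omega_apply {N : ℕ} (X : Loop N) (i j : Fin N) : omega X i j = omegaCoeff (X j i) := rfl

lemma eta_mul {N : ℕ} (X Y : Loop N) : eta (X * Y) = eta X * eta Y := by
  simp only [eta_eq_map, map_mul]

lemma eta_eta {N : ℕ} (X : Loop N) : eta (eta X) = X := by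
  ext i j
  simp only [eta_eq_map, AlgHom.mapMatrix_apply, Matrix.map_apply, twist_twist, altChar_mul_self,
    twist_one]

def jSign (p : ℕ) {n : ℕ} (i : Fin n) : ℤ := if (i : ℕ) < p then 1 else -1

lemma jSign_mul_self (p : ℕ) {n : ℕ} (i : Fin n) : jSign p i * jSign p i = 1 := by
  unfold jSign
  split_ifs <;> rfl

lemma Jmat_eq_diagonal (p q : ℕ) :
    Jmat p q = Matrix.diagonal fun i => ((jSign p i : ℤ) : LaurentPolynomial ℂ) := by
  unfold Jmat jSign
  congr 1
  ext i
  split_ifs <;> simp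

lemma Jmat_mul_self (p q : ℕ) : Jmat p q * Jmat p q = 1 := by
  rw [Jmat_eq_diagonal, Matrix.diagonal_mul_diagonal, ← Matrix.diagonal_one]
  simp only [← Int.cast_mul, jSign_mul_self, Int.cast_one]

lemma eta_Jmat (p q : ℕ) : eta (Jmat p q) = Jmat p q := by
  rw [eta_eq_map, Jmat_eq_diagonal, AlgHom.mapMatrix_apply, Matrix.diagonal_map (map_zero _)]
  simp only [map_intCast]

lemma tauJ_apply (p q : ℕ) (X : Loop (p + q)) (i j : Fin (p + q)) :
    tauJ p q X i j = (jSign p i * jSign p j) • twist altChar (X i j) := by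
  rw [tauJ, Jmat_eq_diagonal, Matrix.mul_diagonal, Matrix.diagonal_mul, eta_eq_map,
    AlgHom.mapMatrix_apply, Matrix.map_apply, zsmul_eq_mul, Int.cast_mul]
  ring

lemma tauJ_tauJ (p q : ℕ) (X : Loop (p + q)) : tauJ p q (tauJ p q X) = X := by
  simp only [tauJ, eta_mul, eta_Jmat, eta_eta]
  simp only [← mul_assoc, Jmat_mul_self, one_mul]
  simp only [mul_assoc, Jmat_mul_self, mul_one]

lemma tauJ_omega (p q : ℕ) (X : Loop (p + q)) : tauJ p q (omega X) = omega (tauJ p q X) := by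
  ext i j
  rw [tauJ_apply, omega_apply, omega_apply, tauJ_apply, map_zsmul, twist_altChar_omegaCoeff,
    mul_comm]

def tauJAlgHom (p q : ℕ) : Loop (p + q) →ₐ[ℂ] Loop (p + q) where
  toFun := tauJ p q
  map_one' := by rw [tauJ, eta_eq_map, map_one, mul_one, Jmat_mul_self]
  map_mul' X Y := by
    simp only [tauJ, eta_mul, mul_assoc]
    rw [← mul_assoc (Jmat p q) (Jmat p q), Jmat_mul_self, one_mul]
  map_zero' := by rw [tauJ, eta_eq_map, map_zero, mul_zero, zero_mul]
  map_add' X Y := by simp only [tauJ, eta_eq_map, map_add, mul_add, add_mul]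
  commutes' c := by
    rw [tauJ, eta_eq_map, AlgHom.commutes, mul_assoc, Algebra.commutes, ← mul_assoc, Jmat_mul_self,
      one_mul]

lemma tauJAlgHom_apply (p q : ℕ) (X : Loop (p + q)) : tauJAlgHom p q X = tauJ p q X := rfl

theorem tauJ_involution_general (p q : ℕ) :
    (∀ X : Loop (p + q), tauJ p q (tauJ p q X) = X) ∧
    (∀ X Y : Loop (p + q), tauJ p q (X + Y) = tauJ p q X + tauJ p q Y) ∧
    (∀ (c : ℂ) (X : Loop (p + q)), tauJ p q (c • X) = c • tauJ p q X) ∧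
    (∀ a b : Loop (p + q), tauJ p q ⁅a, b⁆ = ⁅tauJ p q a, tauJ p q b⁆) ∧
    (∀ X : Loop (p + q), tauJ p q (omega X) = omega (tauJ p q X)) :=
  ⟨tauJ_tauJ p q, map_add (tauJAlgHom p q), map_smul (tauJAlgHom p q),
    fun a b => by simp only [Ring.lie_def, ← tauJAlgHom_apply, map_sub, map_mul], tauJ_omega p q⟩

/-- `τ = σ_J ∘ η` is an involutive ℂ-linear Lie algebra automorphism of the loop algebra
commuting with the Cartan involution ω. -/
theorem tauJ_involution (p q : ℕ) (hp : 0 < p) (hq : 0 < q) :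
    (∀ X : Loop (p + q), tauJ p q (tauJ p q X) = X) ∧
    (∀ X Y : Loop (p + q), tauJ p q (X + Y) = tauJ p q X + tauJ p q Y) ∧
    (∀ (c : ℂ) (X : Loop (p + q)), tauJ p q (c • X) = c • tauJ p q X) ∧
    (∀ a b : Loop (p + q), tauJ p q ⁅a, b⁆ = ⁅tauJ p q a, tauJ p q b⁆) ∧
    (∀ X : Loop (p + q), tauJ p q (omega X) = omega (tauJ p q X)) :=
  tauJ_involution_general p q
end
end
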